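/- arXiv:1608.04625 — 5 statements merged into one kernel-verified Lean document; each statement's English description precedes it below -/
import Mathlib

section
/- Let z_1, …, z_N be pairwise distinct complex numbers. Then the quadratic Gaudin Hamiltonians pairwise commute: H_i ∘ H_j = H_j ∘ H_i as endomorphisms of V_1 ⊗ ⋯ ⊗ V_N, for all 1 ≤ i, j ≤ N. -/
/-! The Casimir tensor `∑ₐ xₐ ⊗ xₐ` of a basis orthonormal for the invariant Killing form is
`𝔤`-invariant, so `Ωⁱᵏ = ∑ₐ xₐ⁽ⁱ⁾ xₐ⁽ᵏ⁾` commutes with `x⁽ⁱ⁾ + x⁽ᵏ⁾`. This yields the infinitesimal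
braid relations `[Ωⁱʲ, Ωⁱᵏ + Ωʲᵏ] = 0` and `[Ωⁱʲ, Ωᵏˡ] = 0` for disjoint pairs. In `[Hᵢ, Hⱼ]` they
reduce the contribution of each third site `m` to a multiple of `[Ωⁱʲ, Ωʲᵐ]`, whose coefficient
vanishes by the partial-fraction identity
`1/((zᵢ - zⱼ)(zⱼ - zₘ)) + 1/((zⱼ - zᵢ)(zᵢ - zₘ)) = 1/((zᵢ - zₘ)(zⱼ - zₘ))`. -/

open scoped TensorProduct

noncomputable section

variable {𝔤 : Type*} [LieRing 𝔤] [LieAlgebra ℂ 𝔤]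
variable {N : ℕ} (V : Fin N → Type*) [∀ i, AddCommGroup (V i)] [∀ i, Module ℂ (V i)]
  [∀ i, LieRingModule 𝔤 (V i)] [∀ i, LieModule ℂ 𝔤 (V i)]

/-- The endomorphism `x^{(i)}` of `V 1 ⊗ ⋯ ⊗ V N` acting as `x` in the `i`-th tensor
factor and as the identity in the other factors. -/
def opAt (i : Fin N) (x : 𝔤) : Module.End ℂ (⨂[ℂ] j, V j) :=
  PiTensorProduct.map
    (Function.update (fun j => (LinearMap.id : V j →ₗ[ℂ] V j)) i
      (LieModule.toEnd ℂ 𝔤 (V i) x))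

/-- The quadratic Gaudin Hamiltonian
`H i = ∑_{k ≠ i} (z i - z k)⁻¹ ∑_a x_a^{(i)} ∘ x_a^{(k)}`. -/
def gaudinH {d : ℕ} (b : Fin d → 𝔤) (z : Fin N → ℂ) (i : Fin N) :
    Module.End ℂ (⨂[ℂ] j, V j) :=
  ∑ k ∈ Finset.univ.erase i, (z i - z k)⁻¹ •
    ∑ a, opAt V i (b a) * opAt V k (b a)

attribute [local instance] LieRing.ofAssociativeRing

theorem Ring.lie_mul {A : Type*} [Ring A] (a b c : A) : ⁅a, b * c⁆ = ⁅a, b⁆ * c + b * ⁅a, c⁆ := by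
  simp only [Ring.lie_def]
  noncomm_ring

section OrthonormalBasis

variable {R M ι : Type*} [CommRing R] [AddCommGroup M] [Module R M] [Fintype ι] [DecidableEq ι]
  {B : LinearMap.BilinForm R M} {b : Module.Basis ι R M}

theorem Module.Basis.repr_apply_eq_bilin_right
    (hb : ∀ a a', B (b a) (b a') = if a = a' then 1 else 0) (x : M) (c : ι) :
    b.repr x c = B x (b c) := by
  conv_rhs => rw [← b.sum_repr x]
  simp [hb, -Module.Basis.sum_repr]

theorem Module.Basis.repr_apply_eq_bilin_left
    (hb : ∀ a a', B (b a) (b a') = if a = a' then 1 else 0) (x : M) (c : ι) :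
    b.repr x c = B (b c) x := by
  conv_rhs => rw [← b.sum_repr x]
  simp [hb, -Module.Basis.sum_repr]

end OrthonormalBasis

section InvariantCasimir

variable {R L ι : Type*} [CommRing R] [LieRing L] [LieAlgebra R L] [Fintype ι] [DecidableEq ι]
  {B : LinearMap.BilinForm R L} {b : Module.Basis ι R L}

theorem Module.Basis.repr_lie_apply_antisymm (hB : B.lieInvariant L)
    (hb : ∀ a a', B (b a) (b a') = if a = a' then 1 else 0) (y : L) (a c : ι) :
    b.repr ⁅y, b a⁆ c = -b.repr ⁅y, b c⁆ a := by
  rw [b.repr_apply_eq_bilin_right hb, b.repr_apply_eq_bilin_left hb, hB]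

theorem Module.Basis.sum_lie_tmul_add_tmul_lie (hB : B.lieInvariant L)
    (hb : ∀ a a', B (b a) (b a') = if a = a' then 1 else 0) (y : L) :
    ∑ a, (⁅y, b a⁆ ⊗ₜ[R] b a + b a ⊗ₜ[R] ⁅y, b a⁆) = 0 := by
  have expand_left : ∀ a, ⁅y, b a⁆ ⊗ₜ[R] b a = ∑ c, b.repr ⁅y, b a⁆ c • (b c ⊗ₜ[R] b a) := by
    intro a
    conv_lhs => rw [← b.sum_repr ⁅y, b a⁆, TensorProduct.sum_tmul]
    simp only [TensorProduct.smul_tmul']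
  have expand_right : ∀ a, b a ⊗ₜ[R] ⁅y, b a⁆ = ∑ c, b.repr ⁅y, b a⁆ c • (b a ⊗ₜ[R] b c) := by
    intro a
    conv_lhs => rw [← b.sum_repr ⁅y, b a⁆, TensorProduct.tmul_sum]
    simp only [TensorProduct.tmul_smul]
  simp only [Finset.sum_add_distrib, expand_left, expand_right]
  rw [Finset.sum_comm (f := fun a c => b.repr ⁅y, b a⁆ c • (b a ⊗ₜ[R] b c)),
    ← Finset.sum_add_distrib]
  refine Finset.sum_eq_zero fun a _ => ?_
  rw [← Finset.sum_add_distrib]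
  refine Finset.sum_eq_zero fun c _ => ?_
  rw [b.repr_lie_apply_antisymm hB hb y c a, neg_smul, add_neg_cancel]

variable {A : Type*} [Ring A] [Algebra R A]

theorem Module.Basis.lie_add_sum_mul_eq_zero (hB : B.lieInvariant L)
    (hb : ∀ a a', B (b a) (b a') = if a = a' then 1 else 0) {ρ σ : L →ₗ⁅R⁆ A}
    (hρσ : ∀ x y, Commute (ρ x) (σ y)) (y : L) :
    ⁅ρ y + σ y, ∑ a, ρ (b a) * σ (b a)⁆ = 0 := by
  have leibniz : ∀ a, ⁅ρ y + σ y, ρ (b a) * σ (b a)⁆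
      = ρ ⁅y, b a⁆ * σ (b a) + ρ (b a) * σ ⁅y, b a⁆ := by
    intro a
    rw [Ring.lie_mul, add_lie, add_lie, (hρσ y _).lie_eq, (hρσ _ y).symm.lie_eq,
      ρ.map_lie, σ.map_lie, add_zero, zero_add]
  calc ⁅ρ y + σ y, ∑ a, ρ (b a) * σ (b a)⁆
      = TensorProduct.lift ((LinearMap.mul R A).compl₁₂ (ρ : L →ₗ[R] A) (σ : L →ₗ[R] A))
          (∑ a, (⁅y, b a⁆ ⊗ₜ[R] b a + b a ⊗ₜ[R] ⁅y, b a⁆)) := by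
        simp [lie_sum, leibniz]
    _ = 0 := by rw [b.sum_lie_tmul_add_tmul_lie hB hb, map_zero]

end InvariantCasimir

section InfinitesimalBraid

variable {K A ι : Type*} [Field K] [LieRing A] [LieAlgebra K A]

structure IsInfinitesimalBraid (Ω : ι → ι → A) : Prop where
  symm : ∀ ⦃i k⦄, i ≠ k → Ω i k = Ω k i
  lie_eq_zero : ∀ ⦃i k l m⦄, i ≠ k → l ≠ m → i ≠ l → i ≠ m → k ≠ l → k ≠ m → ⁅Ω i k, Ω l m⁆ = 0
  lie_add_eq_zero : ∀ ⦃i j k⦄, i ≠ j → i ≠ k → j ≠ k → ⁅Ω i j, Ω i k + Ω j k⁆ = 0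

def gaudinElement [Fintype ι] [DecidableEq ι] (Ω : ι → ι → A) (z : ι → K) (i : ι) : A :=
  ∑ k ∈ Finset.univ.erase i, (z i - z k)⁻¹ • Ω i k

theorem lie_sum_sum_of_lie_eq_zero {α : Type*} {s : Finset α} {u v : α → A}
    (h : ∀ m ∈ s, ∀ m' ∈ s, m ≠ m' → ⁅u m, v m'⁆ = 0) :
    ⁅∑ m ∈ s, u m, ∑ m ∈ s, v m⁆ = ∑ m ∈ s, ⁅u m, v m⁆ := by
  rw [sum_lie]
  refine Finset.sum_congr rfl fun m hm => ?_
  rw [lie_sum, Finset.sum_eq_single_of_mem m hm fun m' hm' hne => h m hm m' hm' hne.symm]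

namespace IsInfinitesimalBraid

variable {Ω : ι → ι → A} (hΩ : IsInfinitesimalBraid Ω) {z : ι → K}
include hΩ

theorem three_site_sum_eq_zero (hz : Function.Injective z) {i j m : ι} (hij : i ≠ j)
    (him : i ≠ m) (hjm : j ≠ m) :
    ((z i - z j)⁻¹ * (z j - z m)⁻¹) • ⁅Ω i j, Ω j m⁆
      + ((z j - z i)⁻¹ * (z i - z m)⁻¹) • ⁅Ω i m, Ω i j⁆
      + ((z i - z m)⁻¹ * (z j - z m)⁻¹) • ⁅Ω i m, Ω j m⁆ = 0 := by
  have h₁ : ⁅Ω i m, Ω i j⁆ = ⁅Ω i j, Ω j m⁆ := by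
    have := hΩ.lie_add_eq_zero hij him hjm
    rw [lie_add] at this
    rw [← lie_skew, eq_neg_of_add_eq_zero_left this, neg_neg]
  have h₂ : ⁅Ω i m, Ω j m⁆ = -⁅Ω i j, Ω j m⁆ := by
    have := hΩ.lie_add_eq_zero him hij hjm.symm
    rw [hΩ.symm hjm.symm, lie_add] at this
    rw [← h₁, eq_neg_iff_add_eq_zero, add_comm, this]
  have hij' : z i - z j ≠ 0 := sub_ne_zero.2 (hz.ne hij)
  have him' : z i - z m ≠ 0 := sub_ne_zero.2 (hz.ne him)
  have hjm' : z j - z m ≠ 0 := sub_ne_zero.2 (hz.ne hjm)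
  have hji' : z j - z i ≠ 0 := sub_ne_zero.2 (hz.ne hij.symm)
  have partial_fractions : (z i - z j)⁻¹ * (z j - z m)⁻¹ + (z j - z i)⁻¹ * (z i - z m)⁻¹
      = (z i - z m)⁻¹ * (z j - z m)⁻¹ := by
    field_simp
    ring
  rw [h₁, h₂]
  linear_combination (norm := module) partial_fractions • ⁅Ω i j, Ω j m⁆

theorem lie_gaudinElement_eq_zero [Fintype ι] [DecidableEq ι] (hz : Function.Injective z)
    (i j : ι) : ⁅gaudinElement Ω z i, gaudinElement Ω z j⁆ = 0 := by
  rcases eq_or_ne i j with rfl | hij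
  · exact lie_self _
  set S := (Finset.univ.erase i).erase j
  have mem_S : ∀ m ∈ S, i ≠ m ∧ j ≠ m := fun m hm => by
    simp only [S, Finset.mem_erase] at hm
    exact ⟨hm.2.1.symm, hm.1.symm⟩
  have split_i : gaudinElement Ω z i
      = (z i - z j)⁻¹ • Ω i j + ∑ m ∈ S, (z i - z m)⁻¹ • Ω i m :=
    (Finset.add_sum_erase _ _ (by simpa using hij.symm)).symm
  have split_j : gaudinElement Ω z j
      = (z j - z i)⁻¹ • Ω i j + ∑ m ∈ S, (z j - z m)⁻¹ • Ω j m := by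
    rw [gaudinElement, ← Finset.add_sum_erase _ _ (by simpa using hij), Finset.erase_right_comm,
      hΩ.symm hij.symm]
  have diagonal : ⁅∑ m ∈ S, (z i - z m)⁻¹ • Ω i m, ∑ m ∈ S, (z j - z m)⁻¹ • Ω j m⁆
      = ∑ m ∈ S, ⁅(z i - z m)⁻¹ • Ω i m, (z j - z m)⁻¹ • Ω j m⁆ :=
    lie_sum_sum_of_lie_eq_zero fun m hm m' hm' hne => by
      rw [lie_smul, smul_lie, hΩ.lie_eq_zero (mem_S m hm).1 (mem_S m' hm').2 hij
        (mem_S m' hm').1 (mem_S m hm).2.symm hne, smul_zero, smul_zero]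
  rw [split_i, split_j, lie_add, add_lie, add_lie, diagonal]
  simp only [lie_smul, smul_lie, lie_self, smul_zero, zero_add, lie_sum, sum_lie,
    Finset.smul_sum, smul_smul, ← Finset.sum_add_distrib]
  refine Finset.sum_eq_zero fun m hm => ?_
  linear_combination (norm := module)
    hΩ.three_site_sum_eq_zero hz hij (mem_S m hm).1 (mem_S m hm).2

end IsInfinitesimalBraid

end InfinitesimalBraid

section SiteOperators

theorem opAt_tprod (i : Fin N) (x : 𝔤) (v : Π j, V j) :
    opAt V i x (PiTensorProduct.tprod ℂ v)
      = PiTensorProduct.tprod ℂ (Function.update v i ⁅x, v i⁆) := by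
  rw [opAt, PiTensorProduct.map_tprod]
  congr 1
  ext j
  rcases eq_or_ne j i with rfl | h
  · simp
  · simp [Function.update_of_ne h]

theorem opAt_commute {i k : Fin N} (h : i ≠ k) (x y : 𝔤) :
    Commute (opAt V i x) (opAt V k y) := by
  apply PiTensorProduct.ext
  ext v
  simp only [LinearMap.compMultilinearMap_apply, Module.End.mul_apply, opAt_tprod,
    Function.update_of_ne h, Function.update_of_ne h.symm, Function.update_comm h]

def opAtLieHom (i : Fin N) : 𝔤 →ₗ⁅ℂ⁆ Module.End ℂ (⨂[ℂ] j, V j) where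
  toFun := opAt V i
  map_add' x y := by simp only [opAt, map_add, PiTensorProduct.map_update_add]
  map_smul' c x := by simp only [opAt, map_smul, PiTensorProduct.map_update_smul]; rfl
  map_lie' {x y} := by
    apply PiTensorProduct.ext
    ext v
    simp only [LinearMap.compMultilinearMap_apply, Ring.lie_def, LinearMap.sub_apply,
      Module.End.mul_apply, opAt_tprod, Function.update_idem, Function.update_self,
      lie_lie, MultilinearMap.map_update_sub]

variable {d : ℕ}

def casimirOp (b : Fin d → 𝔤) (i k : Fin N) : Module.End ℂ (⨂[ℂ] j, V j) :=
  ∑ a, opAt V i (b a) * opAt V k (b a)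

theorem opAt_commute_casimirOp (b : Fin d → 𝔤) {i k m : Fin N} (hi : m ≠ i) (hk : m ≠ k)
    (y : 𝔤) : Commute (opAt V m y) (casimirOp V b i k) :=
  Commute.sum_right _ _ _ fun a _ =>
    (opAt_commute V hi y (b a)).mul_right (opAt_commute V hk y (b a))

theorem casimirOp_isInfinitesimalBraid (b : Module.Basis (Fin d) ℂ 𝔤)
    (horth : ∀ a a', killingForm ℂ 𝔤 (b a) (b a') = if a = a' then 1 else 0) :
    IsInfinitesimalBraid (casimirOp V b) where
  symm i k h := Finset.sum_congr rfl fun a _ => opAt_commute V h (b a) (b a)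
  lie_eq_zero i k l m _ _ hil him hkl hkm :=
    (Commute.sum_left _ _ _ fun a _ =>
      (opAt_commute_casimirOp V b hil him (b a)).mul_left
        (opAt_commute_casimirOp V b hkl hkm (b a))).lie_eq
  lie_add_eq_zero i j k hij hik hjk := by
    have invariant : ∀ y, ⁅casimirOp V b i j, opAt V i y + opAt V j y⁆ = 0 := fun y => by
      rw [← lie_skew, neg_eq_zero]
      exact b.lie_add_sum_mul_eq_zero (LieModule.traceForm_lieInvariant ℂ 𝔤 𝔤) horth
        (ρ := opAtLieHom V i) (σ := opAtLieHom V j) (fun x y => opAt_commute V hij x y) y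
    have sum_k : casimirOp V b i k + casimirOp V b j k
        = ∑ a, (opAt V i (b a) + opAt V j (b a)) * opAt V k (b a) := by
      simp only [casimirOp, add_mul, Finset.sum_add_distrib]
    rw [sum_k, lie_sum]
    refine Finset.sum_eq_zero fun a _ => ?_
    rw [Ring.lie_mul, invariant,
      (opAt_commute_casimirOp V b hik.symm hjk.symm (b a)).symm.lie_eq, zero_mul, mul_zero,
      add_zero]

end SiteOperators

theorem gaudin_hamiltonians_commute
    {d : ℕ} (b : Module.Basis (Fin d) ℂ 𝔤)
    (horth : ∀ a a' : Fin d, killingForm ℂ 𝔤 (b a) (b a') = if a = a' then 1 else 0)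
    (z : Fin N → ℂ) (hz : Function.Injective z) (i j : Fin N) :
    gaudinH V (⇑b) z i * gaudinH V (⇑b) z j = gaudinH V (⇑b) z j * gaudinH V (⇑b) z i :=
  sub_eq_zero.mp ((casimirOp_isInfinitesimalBraid V b horth).lie_gaudinElement_eq_zero hz i j)
end
end

section
/- Let V be a finite-dimensional vector space over ℂ and let A ⊆ End(V) be a commutative (unital) subalgebra such that every element of A is a semisimple (diagonalizable) endomorphism, and such that A admits a cyclic vector v with A·v = V. Then for every ℂ-algebra homomorphism χ : A → ℂ, the joint eigenspace {w ∈ V : a(w) = χ(a)·w for all a ∈ A} has dimension at most 1. -/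
set_option maxHeartbeats 1000000
set_option synthInstance.maxHeartbeats 100000


noncomputable section

/-- if a commutative unital subalgebra `A ⊆ End(V)` consists of
semisimple (diagonalizable) endomorphisms and has a cyclic vector, then every
joint eigenspace (for any algebra homomorphism `χ : A → ℂ`) has dimension at
most `1`. -/
theorem joint_eigenspace_dim_le_one
    {V : Type*} [AddCommGroup V] [Module ℂ V] [FiniteDimensional ℂ V]
    (A : Subalgebra ℂ (Module.End ℂ V))
    (hcomm : ∀ x ∈ A, ∀ y ∈ A, x * y = y * x)
    (hss : ∀ a ∈ A, Module.End.IsSemisimple a)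
    (v : V) (hv : ∀ w : V, ∃ a ∈ A, a v = w)
    (χ : A →ₐ[ℂ] ℂ) :
    Module.finrank ℂ
      ↥(⨅ a : A, Module.End.eigenspace (a : Module.End ℂ V) (χ a)) ≤ 1 := by
  classical
  set f : A → Module.End ℂ V := fun a => (a : Module.End ℂ V) with hf
  have hfss : ∀ a : A, (f a).IsFinitelySemisimple :=
    fun a => (hss a a.2).isFinitelySemisimple
  have hfcomm : ∀ a b : A, Commute (f a) (f b) := fun a b => hcomm a a.2 b b.2
  have hmax : ∀ (a : A) (μ : ℂ), (f a).maxGenEigenspace μ = (f a).eigenspace μ :=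
    fun a μ => (hfss a).maxGenEigenspace_eq_eigenspace μ
  -- joint eigenspaces
  set g : (A → ℂ) → Submodule ℂ V := fun χ' => ⨅ a : A, (f a).eigenspace (χ' a) with hg
  have hgmax : (fun χ' : A → ℂ => ⨅ a : A, (f a).maxGenEigenspace (χ' a)) = g := by
    funext χ'; simp only [hg, hmax]
  -- the joint eigenspaces span
  have htop : ⨆ χ' : A → ℂ, g χ' = ⊤ := by
    rw [← hgmax]
    exact Module.End.iSup_iInf_maxGenEigenspace_eq_top_of_iSup_maxGenEigenspace_eq_top_of_commute
      f (fun a b _ => hfcomm a b) (fun a => (f a).iSup_maxGenEigenspace_eq_top)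
  -- the joint eigenspaces are independent
  have hind : iSupIndep g := by
    rw [← hgmax]
    exact Module.End.independent_iInf_maxGenEigenspace_of_forall_mapsTo f
      (fun a b φ => Module.End.mapsTo_maxGenEigenspace_of_comm (hfcomm b a) φ)
  set χ₀ : A → ℂ := fun a => χ a with hχ₀
  set W : Submodule ℂ V := g χ₀ with hW
  set U : Submodule ℂ V := ⨆ χ' ∈ ({χ₀}ᶜ : Set (A → ℂ)), g χ' with hU
  have hdisj : Disjoint W U := hind χ₀
  have hsup : W ⊔ U = ⊤ := by
    rw [← htop]
    refine le_antisymm (sup_le (le_iSup g χ₀) (iSup₂_le fun χ' _ => le_iSup g χ')) ?_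
    refine iSup_le fun χ' => ?_
    rcases eq_or_ne χ' χ₀ with h | h
    · exact h ▸ le_sup_left
    · exact le_trans (le_iSup₂ (f := fun χ'' _ => g χ'') χ' h) le_sup_right
  -- invariance of each joint eigenspace, hence of U
  have hginv : ∀ (a : A) (χ' : A → ℂ), ∀ x ∈ g χ', f a x ∈ g χ' := by
    intro a χ' x hx
    simp only [hg, Submodule.mem_iInf, Module.End.mem_eigenspace_iff] at hx ⊢
    intro b
    have := LinearMap.congr_fun (hfcomm b a) x
    simp only [Module.End.mul_apply] at this
    rw [this, hx b, map_smul]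
  have hUinv : ∀ (a : A), ∀ x ∈ U, f a x ∈ U := by
    intro a
    have : U ≤ Submodule.comap (f a) U := by
      conv_lhs => rw [hU]
      refine iSup₂_le fun χ' hχ' x hx => ?_
      exact Submodule.mem_comap.mpr
        ((le_iSup₂ (f := fun χ'' _ => g χ'') χ' hχ') (hginv a χ' x hx))
    exact fun x hx => this hx
  -- decompose the cyclic vector
  obtain ⟨w₀, hw₀, u, hu, hvdec⟩ :=
    Submodule.mem_sup.mp (hsup ▸ Submodule.mem_top (x := v))
  -- every element of W is a multiple of w₀
  have hWle : W ≤ Submodule.span ℂ {w₀} := by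
    intro w hw
    obtain ⟨a, ha, hav⟩ := hv w
    set a' : A := ⟨a, ha⟩ with ha'
    have hfw₀ : f a' w₀ = χ a' • w₀ := by
      have := (Submodule.mem_iInf _).mp hw₀ a'
      exact Module.End.mem_eigenspace_iff.mp this
    have hau : f a' u ∈ U := hUinv a' u hu
    have hw' : w = χ a' • w₀ + f a' u := by
      rw [← hav]
      show f a' v = _
      rw [← hvdec, map_add, hfw₀]
    have hauW : f a' u ∈ W := by
      have h1 : χ a' • w₀ ∈ W := W.smul_mem _ hw₀
      have : f a' u = w - χ a' • w₀ := by rw [hw']; abel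
      rw [this]
      exact W.sub_mem hw h1
    have hzero : f a' u = 0 := by
      have := hdisj.le_bot ⟨hauW, hau⟩
      simpa using this
    rw [hw', hzero, add_zero]
    exact Submodule.smul_mem _ _ (Submodule.mem_span_singleton_self w₀)
  have : Module.finrank ℂ W ≤ Module.finrank ℂ (Submodule.span ℂ ({w₀} : Set V)) :=
    Submodule.finrank_mono hWle
  refine le_trans this ?_
  by_cases h : w₀ = 0
  · rw [h, Submodule.span_zero_singleton]
    simp
  · rw [finrank_span_singleton h]
end
end

section
/- Let V be a finite-dimensional complex inner product space and let A ⊆ End(V) be a commutative (unital) subalgebra such that every element of A is self-adjoint with respect to the inner product, and such that A admits a cyclic vector v with A·v = V. Then V decomposes as a direct sum of one-dimensional joint eigenspaces of A: there exist n = dim V pairwise distinct algebra homomorphisms χ_1, …, χ_n : A → ℂ and a basis w_1, …, w_n of V such that a(w_m) = χ_m(a)·w_m for all a ∈ A and all m. -/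
/-!
Symmetric operators are semisimple, so `A` is a reduced finite-dimensional commutative
`ℂ`-algebra, hence `A ≃ₐ ℂ^ι` with `ι` its maximal spectrum, and the primitive idempotents `e i`
satisfy `a * e i = χ i a • e i`. Commutativity makes `a ↦ a v` injective, so this orbit map is a
linear isomorphism `A ≃ V` intertwining multiplication in `A` with the action on `V`; it carries
the `e i` to a joint eigenbasis `e i v` of `V`.
-/

noncomputable section

theorem LinearMap.IsSymmetric.eq_zero_of_isNilpotent {𝕜 E : Type*} [RCLike 𝕜]
    [NormedAddCommGroup E] [InnerProductSpace 𝕜 E] {T : Module.End 𝕜 E} (hT : T.IsSymmetric)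
    (hn : IsNilpotent T) : T = 0 :=
  Module.End.eq_zero_of_isNilpotent_of_isFinitelySemisimple hn hT.isFinitelySemisimple

theorem Subalgebra.isReduced_of_forall_isSymmetric {𝕜 E : Type*} [RCLike 𝕜]
    [NormedAddCommGroup E] [InnerProductSpace 𝕜 E] (A : Subalgebra 𝕜 (Module.End 𝕜 E))
    (hA : ∀ a ∈ A, (a : Module.End 𝕜 E).IsSymmetric) : IsReduced A where
  eq_zero a ha := Subtype.ext <| (hA a a.2).eq_zero_of_isNilpotent (ha.map A.val)

namespace Subalgebra

variable {R M : Type*} [CommSemiring R] [AddCommMonoid M] [Module R M]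
  (A : Subalgebra R (Module.End R M)) (v : M)

def orbitMap : A →ₗ[R] M where
  toFun a := (a : Module.End R M) v
  map_add' _ _ := rfl
  map_smul' _ _ := rfl

@[simp]
theorem orbitMap_apply (a : A) : A.orbitMap v a = (a : Module.End R M) v := rfl

theorem orbitMap_mul (a b : A) : A.orbitMap v (a * b) = (a : Module.End R M) (A.orbitMap v b) :=
  rfl

variable {A v}

theorem orbitMap_injective (hcomm : ∀ x ∈ A, ∀ y ∈ A, x * y = y * x)
    (hv : ∀ w : M, ∃ a ∈ A, a v = w) : Function.Injective (A.orbitMap v) := by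
  intro a b hab
  have commute_orbit (x : A) {c : Module.End R M} (hc : c ∈ A) :
      (x : Module.End R M) (c v) = c (A.orbitMap v x) := by
    rw [← Module.End.mul_apply, hcomm x x.2 c hc, Module.End.mul_apply, orbitMap_apply]
  ext w
  obtain ⟨c, hc, rfl⟩ := hv w
  rw [commute_orbit a hc, commute_orbit b hc, hab]

def orbitEquiv (hcomm : ∀ x ∈ A, ∀ y ∈ A, x * y = y * x)
    (hv : ∀ w : M, ∃ a ∈ A, a v = w) : A ≃ₗ[R] M :=
  .ofBijective (A.orbitMap v) ⟨orbitMap_injective hcomm hv,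
    fun w ↦ (hv w).elim fun a ha ↦ ⟨⟨a, ha.1⟩, ha.2⟩⟩

@[simp]
theorem orbitEquiv_apply (hcomm : ∀ x ∈ A, ∀ y ∈ A, x * y = y * x)
    (hv : ∀ w : M, ∃ a ∈ A, a v = w) (a : A) : orbitEquiv hcomm hv a = A.orbitMap v a :=
  rfl

end Subalgebra

def Algebra.equivPiOfIsAlgClosedOfIsReduced (k R : Type*) [Field k] [IsAlgClosed k] [CommRing R]
    [Algebra k R] [Module.Finite k R] [IsReduced R] : R ≃ₐ[k] (MaximalSpectrum R → k) :=
  haveI : IsArtinianRing R := .of_finite k R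
  letI (m : MaximalSpectrum R) : Field (R ⧸ m.asIdeal) := Ideal.Quotient.field m.asIdeal
  ((IsArtinianRing.equivPi R).restrictScalars k).trans <|
    AlgEquiv.piCongrRight fun _ ↦ (AlgEquiv.ofBijective (Algebra.ofId k _)
      ⟨(algebraMap k _).injective, IsAlgClosed.algebraMap_bijective_of_isIntegral.2⟩).symm

namespace AlgEquiv

variable {k R ι : Type*} [CommSemiring k] [Semiring R] [Algebra k R] (G : R ≃ₐ[k] (ι → k))

def piCharacter (i : ι) : R →ₐ[k] k := (Pi.evalAlgHom k (fun _ ↦ k) i).comp G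

@[simp]
theorem piCharacter_apply (i : ι) (a : R) : G.piCharacter i a = G a i := rfl

variable [Finite ι]

def piBasis : Module.Basis ι k R := (Pi.basisFun k ι).map G.symm.toLinearEquiv

theorem apply_piBasis [DecidableEq ι] (i : ι) : G (G.piBasis i) = Pi.single i 1 := by
  simp [piBasis]

theorem mul_piBasis (a : R) (i : ι) : a * G.piBasis i = G.piCharacter i a • G.piBasis i := by
  classical
  apply G.injective
  ext j
  rcases eq_or_ne j i with rfl | hji <;> simp [apply_piBasis, *]

theorem piCharacter_injective [Nontrivial k] : Function.Injective G.piCharacter := by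
  classical
  intro i j hij
  by_contra hne
  simpa [apply_piBasis, Pi.single_apply, hne] using congrArg (· (G.piBasis i)) hij

end AlgEquiv

/-- if a commutative unital subalgebra `A ⊆ End(V)` of a
finite-dimensional complex inner product space consists of self-adjoint
operators and has a cyclic vector, then `V` is the direct sum of `dim V`
one-dimensional joint eigenspaces of `A`: there are `dim V` pairwise distinct
characters `χ_m : A → ℂ` and a basis `w_m` of `V` with
`a (w m) = χ m a • w m` for all `a ∈ A` and all `m`. -/
theorem selfadjoint_commutative_cyclic_simple_spectrum
    {V : Type*} [NormedAddCommGroup V] [InnerProductSpace ℂ V] [FiniteDimensional ℂ V]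
    (A : Subalgebra ℂ (Module.End ℂ V))
    (hcomm : ∀ x ∈ A, ∀ y ∈ A, x * y = y * x)
    (hsa : ∀ a ∈ A, LinearMap.IsSymmetric (a : Module.End ℂ V))
    (v : V) (hv : ∀ w : V, ∃ a ∈ A, a v = w) :
    ∃ (χ : Fin (Module.finrank ℂ V) → (A →ₐ[ℂ] ℂ))
      (w : Module.Basis (Fin (Module.finrank ℂ V)) ℂ V),
      Function.Injective χ ∧
        ∀ (a : A) (m : Fin (Module.finrank ℂ V)),
          (a : Module.End ℂ V) (w m) = χ m a • w m := by
  let : CommRing A := { A.toRing with mul_comm x y := Subtype.ext (hcomm x x.2 y y.2) }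
  have := A.isReduced_of_forall_isSymmetric hsa
  have : IsArtinianRing A := .of_finite ℂ A
  let G := Algebra.equivPiOfIsAlgClosedOfIsReduced ℂ A
  let b := G.piBasis.map (Subalgebra.orbitEquiv hcomm hv)
  let e := b.indexEquiv (Module.finBasis ℂ V)
  refine ⟨G.piCharacter ∘ e.symm, b.reindex e, G.piCharacter_injective.comp e.symm.injective,
    fun a m ↦ ?_⟩
  simp only [b, Module.Basis.reindex_apply, Module.Basis.map_apply, Function.comp_apply,
    Subalgebra.orbitEquiv_apply, ← Subalgebra.orbitMap_mul, G.mul_piBasis, map_smul]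
end
end

section
/- Let V be a finite-dimensional vector space over ℂ, let A ⊆ End(V) be a commutative (unital) subalgebra, and suppose V = ⊕_{ν=1}^{m} V_ν is a direct sum decomposition into nonzero A-invariant subspaces such that each V_ν has a cyclic vector v_ν (i.e. A·v_ν = V_ν). Suppose moreover that there exists C ∈ A and pairwise distinct scalars c_1, …, c_m ∈ ℂ such that C acts on V_ν by the scalar c_ν for each ν. Then v_1 + v_2 + ⋯ + v_m is a cyclic vector for A acting on V. -/
noncomputable section

/-- let `A ⊆ End(V)` be a commutative unital subalgebra and
`V = ⊕_ν V_ν` a direct sum decomposition into nonzero `A`-invariant subspaces,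
each with a cyclic vector `v ν`. If some `C ∈ A` acts on each `V_ν` by a scalar
`c ν` and the scalars `c ν` are pairwise distinct, then `∑ ν, v ν` is a cyclic
vector for `A` on `V`. -/
theorem sum_of_cyclic_vectors_is_cyclic
    {V : Type*} [AddCommGroup V] [Module ℂ V] [FiniteDimensional ℂ V]
    {m : ℕ}
    (A : Subalgebra ℂ (Module.End ℂ V))
    (hcomm : ∀ x ∈ A, ∀ y ∈ A, x * y = y * x)
    (Vs : Fin m → Submodule ℂ V)
    (hne : ∀ ν, Vs ν ≠ ⊥)
    (hint : DirectSum.IsInternal Vs)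
    (hinv : ∀ a ∈ A, ∀ ν, ∀ x ∈ Vs ν, a x ∈ Vs ν)
    (v : Fin m → V) (hvmem : ∀ ν, v ν ∈ Vs ν)
    (hcyc : ∀ ν, ∀ x ∈ Vs ν, ∃ a ∈ A, a (v ν) = x)
    (C : Module.End ℂ V) (hCA : C ∈ A)
    (c : Fin m → ℂ) (hc : Function.Injective c)
    (hC : ∀ ν, ∀ x ∈ Vs ν, C x = c ν • x) :
    ∀ x : V, ∃ a ∈ A, a (∑ ν, v ν) = x := by
  classical
  set S : V := ∑ ν, v ν with hS
  -- Lagrange projectors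
  have act : ∀ (ν : Fin m) (s : Finset (Fin m)), ∃ e ∈ A,
      ∀ μ', e (v μ') = (∏ μ ∈ s, (c ν - c μ)⁻¹ * (c μ' - c μ)) • v μ' := by
    intro ν s
    induction s using Finset.induction with
    | empty => exact ⟨1, A.one_mem, by simp⟩
    | @insert a s h ih =>
      obtain ⟨e, he, heq⟩ := ih
      refine ⟨((c ν - c a)⁻¹ • (C - algebraMap ℂ (Module.End ℂ V) (c a))) * e,
        A.mul_mem (A.smul_mem (A.sub_mem hCA (A.algebraMap_mem _)) _) he, ?_⟩
      intro μ'
      rw [Finset.prod_insert h, Module.End.mul_apply, heq, map_smul]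
      simp only [LinearMap.smul_apply, LinearMap.sub_apply, Module.algebraMap_end_apply]
      rw [hC μ' _ (hvmem μ'), ← sub_smul, smul_smul, smul_smul]
      congr 1
      ring
  have key : ∀ ν : Fin m, ∃ e ∈ A, e S = v ν := by
    intro ν
    obtain ⟨e, he, heq⟩ := act ν (Finset.univ.erase ν)
    refine ⟨e, he, ?_⟩
    have eS : ∀ μ', e (v μ') = if μ' = ν then v ν else 0 := by
      intro μ'
      rw [heq]
      by_cases hμ : μ' = ν
      · subst hμ
        rw [if_pos rfl, Finset.prod_congr rfl (fun μ hmem => ?_), Finset.prod_const_one,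
          one_smul]
        exact inv_mul_cancel₀ (sub_ne_zero.mpr fun hh => (Finset.mem_erase.mp hmem).1
          (hc hh).symm)
      · rw [if_neg hμ, Finset.prod_eq_zero (Finset.mem_erase.mpr ⟨hμ, Finset.mem_univ _⟩)
          (by rw [sub_self, mul_zero]), zero_smul]
    rw [hS, map_sum]
    simp_rw [eS]
    simp
  -- the reachable set is a submodule
  let W : Submodule ℂ V :=
    { carrier := {x | ∃ a ∈ A, a S = x}
      add_mem' := by
        rintro x y ⟨a, ha, rfl⟩ ⟨b, hb, rfl⟩
        exact ⟨a + b, A.add_mem ha hb, by simp⟩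
      zero_mem' := ⟨0, A.zero_mem, by simp⟩
      smul_mem' := by
        rintro r x ⟨a, ha, rfl⟩
        exact ⟨r • a, A.smul_mem ha r, by simp⟩ }
  have hW : ∀ ν, Vs ν ≤ W := by
    intro ν x hx
    obtain ⟨a, ha, hav⟩ := hcyc ν x hx
    obtain ⟨e, he, heS⟩ := key ν
    exact ⟨a * e, A.mul_mem ha he, by rw [Module.End.mul_apply, heS, hav]⟩
  have htop : (⊤ : Submodule ℂ V) ≤ W := by
    rw [← hint.submodule_iSup_eq_top]
    exact iSup_le hW
  intro x
  exact htop (Submodule.mem_top (x := x))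
end
end

section
/- Let V be a finite-dimensional vector space over ℂ and let Z ⊆ End(V) be a commutative (unital) subalgebra such that every element of Z is a semisimple (diagonalizable) endomorphism. Then there exists a single element C ∈ Z such that every element of Z is a polynomial (with complex coefficients) in C; in particular the eigenspace decomposition of V with respect to C coincides with the joint eigenspace decomposition of V with respect to Z. -/
/-!
A finite-dimensional commutative algebra `Z` whose elements are semisimple has no nilpotents,
so it is a finite product of copies of `ℂ`, one factor per maximal ideal. An element with
pairwise distinct coordinates generates such a product, by Lagrange interpolation. Once every
`z ∈ Z` is a polynomial `p_z(C)`, `z` acts on the `μ`-eigenspace of `C` by the scalar `p_z(μ)`.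
-/

open Polynomial Function

theorem Polynomial.aeval_pi_surjective_of_injective {K ι : Type*} [Field K] [Finite ι]
    {c : ι → K} (hc : Injective c) : Surjective (aeval c : K[X] →ₐ[K] ι → K) := by
  classical
  have := Fintype.ofFinite ι
  intro r
  refine ⟨Lagrange.interpolate Finset.univ c r, ?_⟩
  ext i
  rw [aeval_pi_apply₂, coe_aeval_eq_eval]
  exact Lagrange.eval_interpolate_at_node r hc.injOn (Finset.mem_univ i)

theorem Polynomial.aeval_surjective_of_algEquiv {K A B : Type*} [CommRing K] [Semiring A]
    [Semiring B] [Algebra K A] [Algebra K B] (e : A ≃ₐ[K] B) {b : B}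
    (hb : Surjective (aeval b : K[X] →ₐ[K] B)) : Surjective (aeval (e.symm b) : K[X] →ₐ[K] A) := by
  rw [aeval_algEquiv]
  exact e.symm.surjective.comp hb

namespace IsAlgClosed

variable (K A : Type*) [Field K] [IsAlgClosed K] [CommRing A] [Algebra K A] [Module.Finite K A]
  [IsReduced A]

noncomputable def algEquivPiMaximalSpectrum : A ≃ₐ[K] (MaximalSpectrum A → K) :=
  have := IsArtinianRing.of_finite K A
  ((IsArtinianRing.equivPi A).restrictScalars K).trans
    (AlgEquiv.piCongrRight (fun _ => (AlgEquiv.ofBijective (Algebra.ofId K _)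
      algebraMap_bijective_of_isIntegral).symm))

theorem exists_aeval_surjective_of_isReduced :
    ∃ C : A, Surjective (aeval C : K[X] →ₐ[K] A) := by
  have := IsArtinianRing.of_finite K A
  let c : MaximalSpectrum A ↪ K :=
    (Finite.equivFin _).toEmbedding.trans (Fin.valEmbedding.trans (Infinite.natEmbedding K))
  exact ⟨_, aeval_surjective_of_algEquiv (algEquivPiMaximalSpectrum K A)
    (aeval_pi_surjective_of_injective c.injective)⟩

end IsAlgClosed

open scoped IsMulCommutative in
theorem Subalgebra.exists_mem_forall_mem_exists_aeval_eq {K B : Type*} [Field K] [IsAlgClosed K]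
    [Ring B] [Algebra K B] (Z : Subalgebra K B) [IsMulCommutative Z] [Module.Finite K Z]
    [IsReduced Z] : ∃ C ∈ Z, ∀ z ∈ Z, ∃ p : K[X], aeval C p = z := by
  obtain ⟨C, hC⟩ := IsAlgClosed.exists_aeval_surjective_of_isReduced K Z
  refine ⟨C, C.2, fun z hz => ?_⟩
  obtain ⟨p, hp⟩ := hC ⟨z, hz⟩
  exact ⟨p, by rw [← aeval_subalgebra_coe, hp]⟩

namespace Module.End

variable {K V : Type*} [Field K] [AddCommGroup V] [Module K V]

theorem isReduced_of_forall_isSemisimple (Z : Subalgebra K (End K V))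
    (hss : ∀ z ∈ Z, IsSemisimple z) : IsReduced Z :=
  ⟨fun z hz => Subtype.ext <| eq_zero_of_isNilpotent_isSemisimple
    (hz.map Z.val) (hss z z.2)⟩

theorem eigenspace_le_eigenspace_aeval (f : End K V) (p : K[X]) (μ : K) :
    eigenspace f μ ≤ eigenspace (aeval f p) (p.eval μ) := by
  intro v hv
  by_cases hv0 : v = 0
  · simp [hv0]
  · exact mem_eigenspace_iff.2 (aeval_apply_of_hasEigenvector ⟨hv, hv0⟩)

theorem exists_eigenspace_eq_iInf_of_forall_mem_exists_aeval_eq (Z : Subalgebra K (End K V))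
    {f : End K V} (hf : f ∈ Z) (hgen : ∀ z ∈ Z, ∃ p : K[X], aeval f p = z) {μ : K}
    (hμ : eigenspace f μ ≠ ⊥) :
    ∃ χ : Z → K, eigenspace f μ = ⨅ z : Z, eigenspace (z : End K V) (χ z) := by
  choose p hp using fun z : Z => hgen z z.2
  have hle (z : Z) : eigenspace f μ ≤ eigenspace (z : End K V) ((p z).eval μ) :=
    hp z ▸ eigenspace_le_eigenspace_aeval f (p z) μ
  have hf_eval : (p ⟨f, hf⟩).eval μ = μ := by
    by_contra hne
    exact hμ <| (disjoint_genEigenspace f hne 1 1).eq_bot_of_ge (hle ⟨f, hf⟩)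
  refine ⟨fun z => (p z).eval μ, le_antisymm (le_iInf hle) ?_⟩
  calc ⨅ z : Z, eigenspace (z : End K V) ((p z).eval μ)
      ≤ eigenspace f ((p ⟨f, hf⟩).eval μ) := iInf_le_of_le ⟨f, hf⟩ le_rfl
    _ = eigenspace f μ := by rw [hf_eval]

end Module.End

/-- a commutative unital subalgebra `Z ⊆ End(V)` consisting of
semisimple (diagonalizable) endomorphisms is generated by a single element:
there is `C ∈ Z` such that every element of `Z` is a polynomial in `C`; in
particular every eigenspace of `C` is a joint eigenspace of `Z`, so the
eigenspace decomposition for `C` coincides with the joint eigenspace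
decomposition for `Z`. -/
theorem commutative_semisimple_subalgebra_monogenic
    {V : Type*} [AddCommGroup V] [Module ℂ V] [FiniteDimensional ℂ V]
    (Z : Subalgebra ℂ (Module.End ℂ V))
    (hcomm : ∀ x ∈ Z, ∀ y ∈ Z, x * y = y * x)
    (hss : ∀ z ∈ Z, Module.End.IsSemisimple z) :
    ∃ C ∈ Z, (∀ z ∈ Z, ∃ p : Polynomial ℂ, Polynomial.aeval C p = z) ∧
      ∀ μ : ℂ, Module.End.eigenspace C μ ≠ ⊥ →
        ∃ χ : Z → ℂ, Module.End.eigenspace C μ =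
          ⨅ z : Z, Module.End.eigenspace (z : Module.End ℂ V) (χ z) := by
  have : IsMulCommutative Z := .of_comm fun x y => Subtype.ext (hcomm x x.2 y y.2)
  have := Module.End.isReduced_of_forall_isSemisimple Z hss
  obtain ⟨C, hCZ, hgen⟩ := Z.exists_mem_forall_mem_exists_aeval_eq
  exact ⟨C, hCZ, hgen, fun μ hμ =>
    Module.End.exists_eigenspace_eq_iInf_of_forall_mem_exists_aeval_eq Z hCZ hgen hμ⟩
end
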